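/- arXiv:0712.0584 — 6 statements merged into one kernel-verified Lean document; each statement's English description precedes it below -/
import Mathlib

section
/- Let κ be an uncountable regular cardinal with κ^{<κ} = κ, and let γ < κ be an ordinal. Then the partition relation κ⁺ → (κ⁺, (ω)_γ)² holds: for every coloring c : [κ⁺]² → {0} ∪ ({1} × γ), either there is a set H ⊆ κ⁺ of cardinality κ⁺ all of whose pairs get color 0, or there is an i < γ and an infinite set H ⊆ κ⁺ all of whose pairs get color (1, i). -/
/-!
Suppose `c` has no `0`-homogeneous set of size `κ⁺` and no infinite homogeneous set of
any other colour. Run a ramification argument along `κ`: at stage `b` the points are split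
into nodes according to their labels at earlier stages; in the node of `x` fix a maximal
`0`-homogeneous set `M`, and label `x` by a pair `(p, i)` with `p ∈ M`, `c {p, x} = i ≠ 0`,
which exists as long as `x ∉ M`. If `x` were labelled at all `κ` stages, then since
`|Γ| < κ = cf κ` some colour `i` occurs at infinitely many stages, and the corresponding points
`p` form an infinite `i`-homogeneous set. So every `x` lies in the set `M` of one of its
nodes. Each such `M` has size at most `κ`, and by induction, using `κ^{<κ} = κ`, there are at
most `κ` nodes at each stage; hence there are at most `κ` points.
-/

open Cardinal Set

universe u

namespace Ramification

variable {X Γ : Type u} (c : Sym2 X → Option Γ)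

def IsHomogeneous (o : Option Γ) (S : Set X) : Prop :=
  S.Pairwise fun a b => c s(a, b) = o

theorem exists_maximal_isHomogeneous_subset (o : Option Γ) (A : Set X) :
    ∃ M, Maximal (fun S => S ⊆ A ∧ IsHomogeneous c o S) M :=
  zorn_subset _ fun C hCA hC =>
    ⟨⋃₀ C, ⟨sUnion_subset fun _ hS => (hCA hS).1, hC.pairwise_sUnion.2 fun _ hS => (hCA hS).2⟩,
      fun _ => subset_sUnion_of_mem⟩

noncomputable def maxHomog (A : Set X) : Set X :=
  (exists_maximal_isHomogeneous_subset c none A).choose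

theorem maximal_maxHomog (A : Set X) :
    Maximal (fun S => S ⊆ A ∧ IsHomogeneous c none S) (maxHomog c A) :=
  (exists_maximal_isHomogeneous_subset c none A).choose_spec

theorem maxHomog_subset (A : Set X) : maxHomog c A ⊆ A :=
  (maximal_maxHomog c A).prop.1

def IsLink (A : Set X) (x : X) (l : X × Γ) : Prop :=
  l.1 ∈ maxHomog c A ∧ l.1 ≠ x ∧ c s(l.1, x) = some l.2

theorem exists_isLink {A : Set X} {x : X} (hx : x ∈ A) (hnx : x ∉ maxHomog c A) :
    ∃ l, IsLink c A x l := by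
  by_contra! hno
  have hcol : ∀ p ∈ maxHomog c A, x ≠ p → c s(p, x) = none := fun p hp hxp => by
    cases h : c s(p, x) with
    | none => rfl
    | some i => exact absurd ⟨hp, hxp.symm, h⟩ (hno (p, i))
  have hins : IsHomogeneous c none (insert x (maxHomog c A)) :=
    pairwise_insert.2 ⟨(maximal_maxHomog c A).prop.2, fun p hp hxp =>
      ⟨Sym2.eq_swap ▸ hcol p hp hxp, hcol p hp hxp⟩⟩
  exact hnx <| (maximal_maxHomog c A).le_of_ge
    ⟨insert_subset hx (maxHomog_subset c A), hins⟩ (subset_insert _ _) (mem_insert x _)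

variable {L : Type u} [LinearOrder L] [WellFoundedLT L]

open Classical in
noncomputable def label : L → X → Option (X × Γ) :=
  wellFounded_lt.fix fun b IH x =>
    if h : ∃ l, IsLink c {y | ∀ a (ha : a < b), IH a ha y = IH a ha x} x l then some h.choose
    else none

def node (b : L) (x : X) : Set X :=
  {y | ∀ a < b, label c a y = label c a x}

open Classical in
theorem label_eq (b : L) (x : X) :
    label c b x = if h : ∃ l, IsLink c (node c b x) x l then some h.choose else none := by
  rw [label, WellFounded.fix_eq]
  rfl

theorem isLink_of_label_eq_some {b : L} {x : X} {l : X × Γ} (h : label c b x = some l) :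
    IsLink c (node c b x) x l := by
  rw [label_eq] at h
  split_ifs at h with hl
  exact Option.some_inj.1 h ▸ hl.choose_spec

theorem mem_maxHomog_of_label_eq_none {b : L} {x : X} (h : label c b x = none) :
    x ∈ maxHomog c (node c b x) := by
  by_contra hx
  rw [label_eq, dif_pos (exists_isLink c (show x ∈ node c b x from fun _ _ => rfl) hx)] at h
  exact Option.some_ne_none _ h

/-- The link point chosen at stage `b` lies in the node of `x`, so at the earlier stage `a` it
carries the same label as `x`. -/
theorem link_ne_and_color {a b : L} {x : X} {l l' : X × Γ} (hab : a < b)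
    (ha : label c a x = some l) (hb : label c b x = some l') :
    l.1 ≠ l'.1 ∧ c s(l.1, l'.1) = some l.2 := by
  have hl' : l'.1 ∈ node c b x := maxHomog_subset c _ (isLink_of_label_eq_some c hb).1
  obtain ⟨-, hne, hcol⟩ := isLink_of_label_eq_some c ((hl' a hab).trans ha)
  exact ⟨hne, hcol⟩

theorem exists_isHomogeneous_infinite_of_forall_label_ne_none (hL : ℵ₀ ≤ #L)
    (hΓ : #Γ < (#L).ord.cof) {x : X} (hx : ∀ b : L, label c b x ≠ none) :
    ∃ i, ∃ H : Set X, H.Infinite ∧ IsHomogeneous c (some i) H := by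
  choose l hl using fun b => Option.ne_none_iff_exists'.1 (hx b)
  have hlink : ∀ a b, a < b → (l a).1 ≠ (l b).1 ∧ c s((l a).1, (l b).1) = some (l a).2 :=
    fun a b hab => link_ne_and_color c hab (hl a) (hl b)
  obtain ⟨i, hi⟩ := infinite_pigeonhole (fun b => (l b).2) hL hΓ
  set S := (fun b => (l b).2) ⁻¹' {i}
  have hS : S.Infinite := by
    rw [← infinite_coe_iff, infinite_iff, hi]
    exact hL
  have hinj : InjOn (fun b => (l b).1) S := fun a _ b _ hab => by
    by_contra hne
    rcases lt_or_gt_of_ne hne with h | h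
    · exact (hlink a b h).1 hab
    · exact (hlink b a h).1 hab.symm
  refine ⟨i, _, hS.image hinj, hinj.pairwise_image.2 fun a ha b hb hne => ?_⟩
  rcases lt_or_gt_of_ne hne with h | h
  · exact (hlink a b h).2.trans (congrArg some ha)
  · exact ((congrArg c Sym2.eq_swap).trans (hlink b a h).2).trans (congrArg some hb)

theorem mk_range_label_le {κ : Cardinal.{u}} (hκ : ℵ₀ ≤ κ) (hΓ : #Γ ≤ κ)
    (hsmall : ∀ A, #(maxHomog c A) ≤ κ) {b : L} (hb : #(range (node c b)) ≤ κ) :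
    #(range (label c b)) ≤ κ := by
  have hsub : range (label c b) ⊆ insert none
      (⋃ A : range (node c b), range fun p : maxHomog c A × Γ => some (p.1.1, p.2)) := by
    rintro _ ⟨x, rfl⟩
    cases h : label c b x with
    | none => exact mem_insert _ _
    | some l =>
      exact mem_insert_of_mem _ <| mem_iUnion.2
        ⟨⟨_, x, rfl⟩, (⟨l.1, (isLink_of_label_eq_some c h).1⟩, l.2), rfl⟩
  calc #(range (label c b))
      ≤ #(⋃ A : range (node c b), range fun p : maxHomog c A × Γ => some (p.1.1, p.2)) + 1 :=
        (mk_le_mk_of_subset hsub).trans mk_insert_le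
    _ ≤ κ * (κ * κ) + 1 := by
        gcongr
        refine (mk_iUnion_le _).trans (mul_le_mul' hb (ciSup_le' fun A => mk_range_le.trans ?_))
        rw [mk_prod, lift_id, lift_id]
        exact mul_le_mul' (hsmall A) hΓ
    _ = κ := by rw [mul_eq_self hκ, mul_eq_self hκ, add_one_eq hκ]

theorem mk_range_node_le {κ : Cardinal.{u}} (hκ : ℵ₀ ≤ κ) (hΓ : #Γ ≤ κ)
    (hsmall : ∀ A, #(maxHomog c A) ≤ κ) (hpow : ∀ b : L, κ ^ #(Iio b) ≤ κ) (b : L) :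
    #(range (node c b)) ≤ κ := by
  induction b using WellFoundedLT.induction with
  | _ b IH =>
  have hsub : range (node c b) ⊆ range fun h : ∀ a : Iio b, range (label c a.1) =>
      {y | ∀ a : Iio b, label c a.1 y = h a} := by
    rintro _ ⟨x, rfl⟩
    exact ⟨fun a => ⟨label c a.1 x, x, rfl⟩, by ext; simp [node]⟩
  calc #(range (node c b)) ≤ #(∀ a : Iio b, range (label c a.1)) :=
        (mk_le_mk_of_subset hsub).trans mk_range_le
    _ ≤ κ ^ #(Iio b) := by
        rw [mk_pi, ← prod_const']
        exact prod_le_prod _ _ fun a => mk_range_label_le c hκ hΓ hsmall (IH a a.2)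
    _ ≤ κ := hpow b

theorem mk_le_of_forall_exists_label_eq_none {κ : Cardinal.{u}} (hκ : ℵ₀ ≤ κ) (hL : #L ≤ κ)
    (hΓ : #Γ ≤ κ) (hsmall : ∀ A, #(maxHomog c A) ≤ κ) (hpow : ∀ b : L, κ ^ #(Iio b) ≤ κ)
    (hdie : ∀ x, ∃ b : L, label c b x = none) : #X ≤ κ := by
  have hcover : (univ : Set X) ⊆ ⋃ b : L, ⋃ A : range (node c b), maxHomog c A := by
    intro x _
    obtain ⟨b, hb⟩ := hdie x
    exact mem_iUnion₂.2 ⟨b, ⟨_, x, rfl⟩, mem_maxHomog_of_label_eq_none c hb⟩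
  calc #X = #(univ : Set X) := mk_univ.symm
    _ ≤ κ * (κ * κ) :=
        (mk_le_mk_of_subset hcover).trans <| (mk_iUnion_le _).trans <| mul_le_mul' hL <|
          ciSup_le' fun b => (mk_iUnion_le _).trans <|
            mul_le_mul' (mk_range_node_le c hκ hΓ hsmall hpow b) (ciSup_le' fun A => hsmall A)
    _ = κ := by rw [mul_eq_self hκ, mul_eq_self hκ]

theorem exists_isHomogeneous_of_lt_mk {κ : Cardinal.{u}} (hreg : κ.IsRegular)
    (hpow : κ ^< κ = κ) (hΓ : #Γ < κ) (hX : κ < #X) :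
    (∃ S : Set X, κ < #S ∧ IsHomogeneous c none S) ∨
      ∃ i, ∃ H : Set X, H.Infinite ∧ IsHomogeneous c (some i) H := by
  refine or_iff_not_imp_left.2 fun hbig => ?_
  have hsmall : ∀ A, #(maxHomog c A) ≤ κ := fun A =>
    not_lt.1 fun hA => hbig ⟨_, hA, (maximal_maxHomog c A).prop.2⟩
  by_contra hno
  have hL : #κ.ord.ToType = κ := mk_ord_toType κ
  have hdie : ∀ x, ∃ b : κ.ord.ToType, label c b x = none := fun x => by
    by_contra! hx
    exact hno <| exists_isHomogeneous_infinite_of_forall_label_ne_none c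
      (hL.symm ▸ hreg.aleph0_le) (by rwa [hL, hreg.cof_ord]) hx
  have hpow' : ∀ b : κ.ord.ToType, κ ^ #(Iio b) ≤ κ := fun b =>
    (le_powerlt κ (by simpa using mk_Iio_lt b)).trans hpow.le
  exact hX.not_ge <| mk_le_of_forall_exists_label_eq_none c hreg.aleph0_le hL.le hΓ.le
    hsmall hpow' hdie

end Ramification

open Ramification

theorem succ_partition_relation_general (κ : Cardinal) (hreg : κ.IsRegular)
    (hpow : κ ^< κ = κ) (γ : Ordinal) (hγ : γ < κ.ord)
    (c : (Order.succ κ).ord.ToType → (Order.succ κ).ord.ToType → Option γ.ToType) :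
    (∃ H : Set (Order.succ κ).ord.ToType, #H = Order.succ κ ∧
      ∀ x ∈ H, ∀ y ∈ H, x < y → c x y = none) ∨
    (∃ i : γ.ToType, ∃ H : Set (Order.succ κ).ord.ToType, H.Infinite ∧
      ∀ x ∈ H, ∀ y ∈ H, x < y → c x y = some i) := by
  let d : Sym2 (Order.succ κ).ord.ToType → Option γ.ToType :=
    Sym2.lift ⟨fun x y => if x < y then c x y else c y x, fun x y => by
      rcases lt_trichotomy x y with h | h | h
      · simp [h, not_lt_of_gt h]
      · rw [h]
      · simp [h, not_lt_of_gt h]⟩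
  have hc : ∀ o H, IsHomogeneous d o H → ∀ x ∈ H, ∀ y ∈ H, x < y → c x y = o :=
    fun o H hH x hx y hy hxy => (if_pos hxy).symm.trans (hH hx hy hxy.ne)
  rcases exists_isHomogeneous_of_lt_mk d hreg hpow (by simpa using lt_ord.1 hγ)
    (by simp) with ⟨S, hS, hSd⟩ | ⟨i, H, hH, hHd⟩
  · obtain ⟨H, hHS, hH⟩ := le_mk_iff_exists_subset.1 (Order.succ_le_of_lt hS)
    exact Or.inl ⟨H, hH, hc _ _ (hSd.mono hHS)⟩
  · exact Or.inr ⟨i, H, hH, hc _ _ hHd⟩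

/-- The partition relation `κ⁺ → (κ⁺, (ω)_γ)²` for an uncountable regular `κ`
with `κ^{<κ} = κ` and `γ < κ`. Pairs `{x, y}` with `x < y` are colored either with
the distinguished color (`none`) or with one of `γ`-many colors (`some i`). -/
theorem succ_partition_relation (κ : Cardinal) (hreg : κ.IsRegular) (hunc : ℵ₀ < κ)
    (hpow : κ ^< κ = κ) (γ : Ordinal) (hγ : γ < κ.ord)
    (c : (Order.succ κ).ord.ToType → (Order.succ κ).ord.ToType → Option γ.ToType) :
    (∃ H : Set (Order.succ κ).ord.ToType, #H = Order.succ κ ∧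
      ∀ x ∈ H, ∀ y ∈ H, x < y → c x y = none) ∨
    (∃ i : γ.ToType, ∃ H : Set (Order.succ κ).ord.ToType, H.Infinite ∧
      ∀ x ∈ H, ∀ y ∈ H, x < y → c x y = some i) :=
  succ_partition_relation_general κ hreg hpow γ hγ c
end

section
/- Let κ be an uncountable regular cardinal with κ^{<κ} = κ, and let ⟨A_ν : ν < κ⁺⟩ be a family of sets each of cardinality less than κ. Then there is a set S ⊆ κ⁺ of cardinality κ⁺ and a set A (the kernel) such that for all distinct ν, μ ∈ S, A_ν ∩ A_μ = A. -/
/-!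
Transfer the family injectively into subsets of `T = κ⁺`, indexed by `T` itself. A closure
argument (a substitute for Fodor's lemma) gives a bound `b` such that `κ⁺` many `ν` have
`B ν ∩ Iio ν ⊆ Iio b`. By `κ^{<κ} = κ` there are only `κ` candidates for the trace `B ν ∩ Iio ν`,
so `κ⁺` many `ν` share one trace `B₀`. Finally choose `ν_i` by recursion with `ν_i` above every
element of the earlier `B ν_j`; any two of the chosen sets then meet exactly in `B₀`.
-/

open Cardinal Ordinal Set

universe u

def IsDeltaSystemOn {ι α : Type*} (A : ι → Set α) (S : Set ι) : Prop :=
  ∃ A₀ : Set α, S.Pairwise fun ν μ => A ν ∩ A μ = A₀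

theorem IsDeltaSystemOn.of_image {ι α β : Type*} {A : ι → Set α} {S : Set ι} {f : α → β}
    (hf : InjOn f (⋃ i, A i)) (h : IsDeltaSystemOn (fun i => f '' A i) S) :
    IsDeltaSystemOn A S := by
  obtain ⟨B₀, hB₀⟩ := h
  refine ⟨f ⁻¹' B₀ ∩ ⋃ i, A i, fun ν hν μ hμ hne => ?_⟩
  have hsub : ∀ i, A i ⊆ ⋃ i, A i := subset_iUnion A
  rw [← hB₀ hν hμ hne, ← hf.image_inter (hsub ν) (hsub μ),
    hf.preimage_image_inter (inter_subset_left.trans (hsub ν))]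

theorem exists_injOn_of_mk_le {α β : Type u} [Nonempty β] {s : Set α} (h : #s ≤ #β) :
    ∃ f : α → β, InjOn f s := by
  classical
  obtain ⟨g⟩ := h
  refine ⟨fun x => if hx : x ∈ s then g ⟨x, hx⟩ else Classical.arbitrary β,
    fun x hx y hy hxy => ?_⟩
  simp only [dif_pos hx, dif_pos hy] at hxy
  exact congrArg Subtype.val (g.injective hxy)

theorem Cardinal.IsRegular.cof_ord_toType {κ : Cardinal.{u}} (hκ : κ.IsRegular) :
    Order.cof κ.ord.ToType = κ := by
  rw [cof_toType, hκ.cof_ord]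

theorem exists_forall_lt_of_mk_lt_cof {α : Type u} [LinearOrder α] {s : Set α}
    (hs : #s < Order.cof α) : ∃ b, ∀ x ∈ s, x < b :=
  not_isCofinal_iff.1 fun h => (Order.cof_le h).not_gt hs

theorem StrictMono.exists_forall_lt_of_mk_lt_cof {I T : Type u} [LinearOrder I] [Preorder T]
    {f : I → T} (hf : StrictMono f) {s : Set T} (hs : ∀ x ∈ s, ∃ i, x ≤ f i)
    (hcard : #s < Order.cof I) : ∃ i, ∀ x ∈ s, x < f i := by
  choose idx hidx using hs
  obtain ⟨i, hi⟩ := _root_.exists_forall_lt_of_mk_lt_cof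
    (mk_range_le.trans_lt hcard : #(range fun x : s => idx x x.2) < _)
  exact ⟨i, fun x hx => (hidx x hx).trans_lt (hf (hi _ ⟨⟨x, hx⟩, rfl⟩))⟩

theorem exists_lt_mk_setOf_eq {κ : Cardinal.{u}} (hκ : ℵ₀ ≤ κ) {α β : Type u} {P : Set α}
    (hP : κ < #P) {Y : Set β} (hY : #Y ≤ κ) {f : α → β} (hf : MapsTo f P Y) :
    ∃ y, κ < #{x ∈ P | f x = y} := by
  by_contra! hfib
  have hcover : P ⊆ ⋃ y ∈ Y, {x ∈ P | f x = y} := fun x hx =>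
    mem_biUnion (hf hx) ⟨hx, rfl⟩
  refine hP.not_ge ((mk_le_mk_of_subset hcover).trans ((mk_biUnion_le _ _).trans ?_))
  calc #Y * ⨆ y : Y, #{x ∈ P | f x = y} ≤ κ * κ := mul_le_mul' hY (ciSup_le' fun y => hfib y)
    _ = κ := mul_eq_self hκ

theorem exists_seq_forall_lt {κ : Cardinal.{u}} (hκ : ℵ₀ ≤ κ) {I T : Type u} [Preorder I]
    [WellFoundedLT I] [LT T] (hI : ∀ i : I, #(Iio i) ≤ κ) {D : Set T}
    (hD : ∀ s : Set T, #s ≤ κ → ∃ d ∈ D, ∀ y ∈ s, y < d) (U : T → Set T)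
    (hU : ∀ x, #(U x) ≤ κ) :
    ∃ f : I → T, (∀ i, f i ∈ D) ∧ ∀ ⦃j i⦄, j < i → ∀ y ∈ U (f j), y < f i := by
  have hunion : ∀ (i : I) (g : ∀ j, j < i → T), #(⋃ j : Iio i, U (g j j.2)) ≤ κ := fun i g =>
    calc #(⋃ j : Iio i, U (g j j.2)) ≤ #(Iio i) * ⨆ j : Iio i, #(U (g j j.2)) := mk_iUnion_le _
      _ ≤ κ * κ := mul_le_mul' (hI i) (ciSup_le' fun j => hU _)
      _ = κ := mul_eq_self hκ
  choose next hnextD hnext using fun i g => hD _ (hunion i g)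
  let f : I → T := wellFounded_lt.fix next
  have hf : ∀ i, f i = next i fun j _ => f j := wellFounded_lt.fix_eq next
  refine ⟨f, fun i => hf i ▸ hnextD _ _, fun j i hji y hy => ?_⟩
  rw [hf i]
  exact hnext _ _ y (mem_iUnion.2 ⟨⟨j, hji⟩, hy⟩)

theorem mk_setOf_subset_mk_lt_le {κ : Cardinal.{u}} (hκ : κ.IsRegular) (hpow : κ ^< κ = κ)
    {T : Type u} {X : Set T} (hX : #X ≤ κ) : #{s : Set T | s ⊆ X ∧ #s < κ} ≤ κ := by
  have hcover : {s : Set T | s ⊆ X ∧ #s < κ} ⊆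
      ⋃ i : κ.ord.ToType, {s | s ⊆ X ∧ #s ≤ #(Iio i)} := by
    rintro s ⟨hsX, hs⟩
    obtain ⟨g⟩ : Nonempty (s ↪ κ.ord.ToType) := by rw [← le_def, mk_ord_toType]; exact hs.le
    obtain ⟨i, hi⟩ := exists_forall_lt_of_mk_lt_cof (s := range g)
      (mk_range_le.trans_lt (hs.trans_eq hκ.cof_ord_toType.symm))
    refine mem_iUnion.2 ⟨i, hsX, ?_⟩
    calc #s = #(range g) := (mk_range_eq g g.injective).symm
      _ ≤ #(Iio i) := mk_le_mk_of_subset fun x hx => hi x hx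
  have hpiece : ∀ i : κ.ord.ToType, #{s | s ⊆ X ∧ #s ≤ #(Iio i)} ≤ κ := fun i =>
    calc #{s | s ⊆ X ∧ #s ≤ #(Iio i)} ≤ max #X ℵ₀ ^ #(Iio i) := mk_bounded_subset_le X _
      _ ≤ κ ^ #(Iio i) := power_le_power_right (max_le hX hκ.aleph0_le)
      _ ≤ κ ^< κ := le_powerlt κ (by simpa using mk_Iio_lt i)
      _ = κ := hpow
  calc #{s : Set T | s ⊆ X ∧ #s < κ}
      ≤ #κ.ord.ToType * ⨆ i : κ.ord.ToType, #{s | s ⊆ X ∧ #s ≤ #(Iio i)} :=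
        (mk_le_mk_of_subset hcover).trans (mk_iUnion_le _)
    _ ≤ κ * κ := mul_le_mul' (mk_ord_toType κ).le (ciSup_le' hpiece)
    _ = κ := mul_eq_self hκ.aleph0_le

section WellOrder

variable {κ : Cardinal.{u}} {T : Type u} [LinearOrder T] [WellFoundedLT T]

/-- Otherwise each set `{ν | B ν ∩ Iio ν ⊆ Iio b}` is bounded by some `H b`. A `κ`-sequence `f`
with `H (f j) < f i` for `j < i` has a supremum `γ` of cofinality `κ`, so the small set
`B γ ∩ Iio γ` lies below some `f i`, and then `γ < H (f i) < γ`. -/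
theorem exists_lt_mk_setOf_inter_Iio_subset_Iio (hκ : κ.IsRegular) (hT : κ < Order.cof T)
    (B : T → Set T) (hB : ∀ ν, #(B ν) < κ) : ∃ b, κ < #{ν | B ν ∩ Iio ν ⊆ Iio b} := by
  by_contra! hsmall
  have hbdd : ∀ s : Set T, #s ≤ κ → ∃ b, ∀ x ∈ s, x < b := fun s hs =>
    exists_forall_lt_of_mk_lt_cof (hs.trans_lt hT)
  choose H hH using fun b => hbdd _ (hsmall b)
  obtain ⟨f, -, hf⟩ := exists_seq_forall_lt (I := κ.ord.ToType) hκ.aleph0_le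
    (fun i => (by simpa using mk_Iio_lt i : #(Iio i) < κ).le)
    (fun s hs => (hbdd s hs).imp fun b hb => ⟨mem_univ b, hb⟩) (fun x => {x, H x})
    (fun x => (mk_insert_le.trans (by simp)).trans hκ.aleph0_le)
  have hmono : StrictMono f := fun j i h => hf h _ (mem_insert _ _)
  obtain ⟨b, hb⟩ := hbdd (range f) (mk_range_le.trans (mk_ord_toType κ).le)
  obtain ⟨γ, hγ, hγmin⟩ := wellFounded_lt.has_min {γ | ∀ i, f i < γ}
    ⟨b, fun i => hb _ (mem_range_self i)⟩
  have hcofinal : ∀ x ∈ B γ ∩ Iio γ, ∃ i, x ≤ f i := fun x hx => by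
    by_contra! h
    exact hγmin x h hx.2
  obtain ⟨i, hi⟩ := hmono.exists_forall_lt_of_mk_lt_cof hcofinal
    ((mk_le_mk_of_subset inter_subset_left).trans_lt ((hB γ).trans_eq hκ.cof_ord_toType.symm))
  obtain ⟨j, hj⟩ := exists_forall_lt_of_mk_lt_cof (s := {i})
    (by rw [mk_singleton, hκ.cof_ord_toType]; exact one_lt_aleph0.trans_le hκ.aleph0_le)
  exact ((hH (f i) γ hi).trans (hf (hj i rfl) _ (mem_insert_of_mem _ rfl))).trans (hγ j)
    |>.false

theorem exists_isDeltaSystemOn_of_inter_Iio_eq (hκ : ℵ₀ ≤ κ) (hT : κ < Order.cof T)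
    (hIio : ∀ i : T, #(Iio i) ≤ κ) {B : T → Set T} (hB : ∀ ν, #(B ν) ≤ κ) {P : Set T}
    (hP : κ < #P) {B₀ : Set T} (hPB : ∀ ν ∈ P, B ν ∩ Iio ν = B₀) :
    ∃ S : Set T, #S = #T ∧ IsDeltaSystemOn B S := by
  have hunbdd : ∀ s : Set T, #s ≤ κ → ∃ d ∈ P, ∀ y ∈ s, y < d := fun s hs => by
    obtain ⟨c, hc⟩ := exists_forall_lt_of_mk_lt_cof (hs.trans_lt hT)
    obtain ⟨d, hdP, hcd⟩ : ∃ d ∈ P, c ≤ d := by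
      by_contra! h
      exact hP.not_ge ((mk_le_mk_of_subset h).trans (hIio c))
    exact ⟨d, hdP, fun y hy => (hc y hy).trans_le hcd⟩
  obtain ⟨g, hgP, hg⟩ := exists_seq_forall_lt hκ hIio hunbdd (fun x => insert x (B x))
    fun x => mk_insert_le.trans ((add_le_add (hB x) (one_le_aleph0.trans hκ)).trans
      (add_eq_self hκ).le)
  have hmono : StrictMono g := fun j i h => hg h _ (mem_insert _ _)
  have hkernel : ∀ ⦃j i⦄, j < i → B (g j) ∩ B (g i) = B₀ := fun j i h => by
    have hB₀ : ∀ k, B₀ ⊆ B (g k) := fun k => hPB _ (hgP k) ▸ inter_subset_left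
    refine (subset_inter (hB₀ j) (hB₀ i)).antisymm' ?_
    rintro x ⟨hxj, hxi⟩
    exact hPB _ (hgP i) ▸ ⟨hxi, hg h x (mem_insert_of_mem _ hxj)⟩
  refine ⟨range g, mk_range_eq g hmono.injective, B₀, ?_⟩
  rintro _ ⟨j, rfl⟩ _ ⟨i, rfl⟩ hne
  rcases lt_or_gt_of_ne (ne_of_apply_ne g hne) with h | h
  · exact hkernel h
  · exact inter_comm (B (g j)) _ ▸ hkernel h

theorem exists_isDeltaSystemOn_of_mk_lt (hκ : κ.IsRegular) (hpow : κ ^< κ = κ)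
    (hT : κ < Order.cof T) (hIio : ∀ i : T, #(Iio i) ≤ κ) (B : T → Set T)
    (hB : ∀ ν, #(B ν) < κ) : ∃ S : Set T, #S = #T ∧ IsDeltaSystemOn B S := by
  obtain ⟨b, hb⟩ := exists_lt_mk_setOf_inter_Iio_subset_Iio hκ hT B hB
  obtain ⟨B₀, hB₀⟩ := exists_lt_mk_setOf_eq hκ.aleph0_le hb
    (mk_setOf_subset_mk_lt_le hκ hpow (hIio b)) (f := fun ν => B ν ∩ Iio ν)
    fun ν hν => ⟨hν, (mk_le_mk_of_subset inter_subset_left).trans_lt (hB ν)⟩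
  exact exists_isDeltaSystemOn_of_inter_Iio_eq hκ.aleph0_le hT hIio (fun ν => (hB ν).le) hB₀
    fun ν hν => hν.2

end WellOrder

theorem delta_system_general (κ : Cardinal) (hreg : κ.IsRegular)
    (hpow : κ ^< κ = κ) {β : Type*}
    (A : (Order.succ κ).ord.ToType → Set β)
    (hA : ∀ ν, #(A ν) < κ) :
    ∃ S : Set (Order.succ κ).ord.ToType, #S = Order.succ κ ∧
      ∃ A₀ : Set β, ∀ ν ∈ S, ∀ μ ∈ S, ν ≠ μ → A ν ∩ A μ = A₀ := by
  have hT : κ < Order.cof (Order.succ κ).ord.ToType :=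
    (Order.lt_succ κ).trans_eq (isRegular_succ hreg.aleph0_le).cof_ord_toType.symm
  have hIio : ∀ i : (Order.succ κ).ord.ToType, #(Iio i) ≤ κ := fun i =>
    Order.lt_succ_iff.1 (by simpa using mk_Iio_lt i)
  have : Nonempty (Order.succ κ).ord.ToType :=
    Order.cof_ne_zero_iff.1 (zero_le.trans_lt hT).ne'
  have hunion : #(⋃ ν, A ν) ≤ #(Order.succ κ).ord.ToType := by
    calc #(⋃ ν, A ν) ≤ #(Order.succ κ).ord.ToType * ⨆ ν, #(A ν) := mk_iUnion_le A
      _ ≤ Order.succ κ * Order.succ κ :=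
        mul_le_mul' (mk_ord_toType _).le (ciSup_le' fun ν => (hA ν).le.trans (Order.le_succ κ))
      _ = #(Order.succ κ).ord.ToType := by
        rw [mk_ord_toType, mul_eq_self (hreg.aleph0_le.trans (Order.le_succ κ))]
  obtain ⟨e, he⟩ := exists_injOn_of_mk_le hunion
  obtain ⟨S, hS, hΔ⟩ := exists_isDeltaSystemOn_of_mk_lt hreg hpow hT hIio
    (fun ν => e '' A ν) fun ν => mk_image_le.trans_lt (hA ν)
  exact ⟨S, hS.trans (mk_ord_toType _), hΔ.of_image he⟩

/-- Generalized Δ-system lemma: if `κ` is uncountable regular with `κ^{<κ} = κ`,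
then any family of `κ⁺`-many sets each of size `< κ` has a Δ-subsystem of size `κ⁺`. -/
theorem delta_system (κ : Cardinal) (hreg : κ.IsRegular) (hunc : ℵ₀ < κ)
    (hpow : κ ^< κ = κ) {β : Type*}
    (A : (Order.succ κ).ord.ToType → Set β)
    (hA : ∀ ν, #(A ν) < κ) :
    ∃ S : Set (Order.succ κ).ord.ToType, #S = Order.succ κ ∧
      ∃ A₀ : Set β, ∀ ν ∈ S, ∀ μ ∈ S, ν ≠ μ → A ν ∩ A μ = A₀ :=
  delta_system_general κ hreg hpow A hA
end

section
/- Let κ be an uncountable regular cardinal, δ an ordinal, and A ⊆ δ a set with 0 ∈ A such that A is <κ-closed in δ (the supremum of any increasing sequence from A of length a regular cardinal less than κ belongs to A ∪ {δ}) and successor-closed in δ (β ∈ A implies β + 1 ∈ A ∪ {δ}). Let α < δ with α ∉ A, and let ζ be the least ordinal ζ ≤ α such that the interval [ζ, α] is disjoint from A. Then ζ > 0, ζ is a limit ordinal, A ∩ ζ is cofinal in ζ, and cf(ζ) ≥ κ. -/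
/-!
By minimality of `ζ`, for `ξ < ζ` the interval `[ξ, α]` meets `A`, necessarily below `ζ`, so `A`
is cofinal in `ζ` (and `ζ > 0` as `0 ∈ A`). If `ζ` were a successor `β + 1`, then `β ∈ A` and
successor-closure would put `ζ` into `A ∪ {δ}`. If `cf ζ < κ`, a cofinal subset of `A ∩ ζ` of order
type `cf ζ`, a regular cardinal, enumerates into a strictly increasing sequence from `A` with
supremum `ζ`, and `<κ`-closure again puts `ζ` into `A ∪ {δ}`. But `ζ ∉ A` and `ζ ≤ α < δ`.
-/

open Cardinal Ordinal Set

universe u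

namespace Ordinal

theorem exists_strictMono_sSup_eq_of_cofinal {ζ : Ordinal.{u}} (hζ : Order.IsSuccLimit ζ)
    {A : Set Ordinal.{u}} (hA : ∀ ξ < ζ, ∃ η ∈ A, η < ζ ∧ ξ ≤ η) :
    ∃ g : ζ.cof.ord.ToType → Ordinal.{u}, StrictMono g ∧ (∀ i, g i ∈ A) ∧
      sSup (range g) = ζ := by
  let s : Set ζ.ToType := {x | (x : Ordinal) ∈ A}
  have hs : IsCofinal s := fun x ↦ by
    obtain ⟨η, hηA, hηζ, hxη⟩ := hA x x.toOrd.2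
    refine ⟨ToType.mk ⟨η, hηζ⟩, by simpa [s] using hηA, ?_⟩
    rw [← ToType.mk.symm_apply_le]
    exact hxη
  obtain ⟨t, hts, ht, htype⟩ := exists_ord_cof_eq_of_isCofinal hs
  rw [cof_toType, ← type_toType ζ.cof.ord] at htype
  let e : ζ.cof.ord.ToType ≃o t := .ofRelIsoLT (type_eq.1 htype.symm).some
  refine ⟨fun i ↦ ((e i : ζ.ToType) : Ordinal), fun i j hij ↦ ?_, fun i ↦ hts (e i).2, ?_⟩
  · exact ToType.mk.symm.strictMono (e.strictMono hij)
  · have : Nonempty ζ.cof.ord.ToType := by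
      simpa [pos_iff_ne_zero] using hζ.bot_lt
    refine csSup_eq_of_forall_le_of_forall_lt_exists_gt (range_nonempty _)
      (by rintro _ ⟨i, rfl⟩; exact ((e i : ζ.ToType).toOrd.2).le) fun ξ hξ ↦ ?_
    obtain ⟨y, hyt, hy⟩ := ht (ToType.mk ⟨ξ + 1, hζ.add_one_lt hξ⟩)
    refine ⟨_, ⟨e.symm ⟨y, hyt⟩, rfl⟩, ?_⟩
    simp only [OrderIso.apply_symm_apply]
    rw [← Order.add_one_le_iff]
    exact ToType.mk.le_symm_apply.2 hy

end Ordinal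

section ClosedSet

variable {A : Set Ordinal.{u}} {δ ζ : Ordinal.{u}}

theorem isSuccLimit_of_cofinal_of_add_one_mem (hζ : ζ ≠ 0) (hζA : ζ ∉ insert δ A)
    (hsuccA : ∀ β ∈ A, β + 1 ∈ insert δ A) (hA : ∀ ξ < ζ, ∃ η ∈ A, η < ζ ∧ ξ ≤ η) :
    Order.IsSuccLimit ζ := by
  refine Ordinal.isSuccLimit_iff.2 ⟨hζ, ?_⟩
  by_contra hsucc
  obtain ⟨β, rfl⟩ := Order.not_isSuccPrelimit_iff_mem_range_succ.1 hsucc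
  obtain ⟨η, hηA, hηζ, hβη⟩ := hA β (Order.lt_succ β)
  obtain rfl : η = β := le_antisymm (Order.lt_succ_iff.1 hηζ) hβη
  exact hζA (Order.succ_eq_add_one η ▸ hsuccA η hηA)

theorem le_cof_of_cofinal_of_closed (κ : Cardinal.{u}) (hζ : Order.IsSuccLimit ζ)
    (hζA : ζ ∉ insert δ A)
    (hclosed : ∀ μ : Cardinal.{u}, μ.IsRegular → μ < κ →
      ∀ g : μ.ord.ToType → Ordinal.{u}, StrictMono g → (∀ i, g i ∈ A) →
        sSup (range g) ∈ insert δ A)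
    (hA : ∀ ξ < ζ, ∃ η ∈ A, η < ζ ∧ ξ ≤ η) : κ ≤ ζ.cof := by
  by_contra! hcof
  obtain ⟨g, hg, hgA, hsup⟩ := exists_strictMono_sSup_eq_of_cofinal hζ hA
  exact hζA (hsup ▸ hclosed _ (isRegular_cof hζ) hcof g hg hgA)

end ClosedSet

theorem least_gap_point_general (κ : Cardinal.{u})
    (δ : Ordinal.{u}) (A : Set Ordinal.{u}) (h0A : (0 : Ordinal) ∈ A)
    (hclosed : ∀ μ : Cardinal.{u}, μ.IsRegular → μ < κ →
      ∀ g : μ.ord.ToType → Ordinal.{u}, StrictMono g → (∀ i, g i ∈ A) →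
        sSup (Set.range g) ∈ insert δ A)
    (hsuccA : ∀ β ∈ A, β + 1 ∈ insert δ A)
    (α : Ordinal.{u}) (hα : α < δ) (hαA : α ∉ A)
    (ζ : Ordinal.{u})
    (hζ : ζ = sInf {ζ' | ζ' ≤ α ∧ ∀ γ, ζ' ≤ γ → γ ≤ α → γ ∉ A}) :
    0 < ζ ∧ Order.IsSuccLimit ζ ∧ (∀ ξ < ζ, ∃ η ∈ A, η < ζ ∧ ξ ≤ η) ∧ κ ≤ ζ.cof := by
  set S : Set Ordinal := {ζ' | ζ' ≤ α ∧ ∀ γ, ζ' ≤ γ → γ ≤ α → γ ∉ A}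
  have hαS : α ∈ S := ⟨le_rfl, fun γ h₁ h₂ ↦ le_antisymm h₂ h₁ ▸ hαA⟩
  obtain ⟨hζα, hgap⟩ : ζ ∈ S := hζ ▸ csInf_mem ⟨α, hαS⟩
  have hζA : ζ ∉ insert δ A := by
    rintro (rfl | hζA)
    · exact (hζα.trans_lt hα).false
    · exact hgap ζ le_rfl hζα hζA
  have hpos : 0 < ζ := pos_iff_ne_zero.2 fun h ↦ hgap 0 h.le zero_le h0A
  have hcof : ∀ ξ < ζ, ∃ η ∈ A, η < ζ ∧ ξ ≤ η := by
    intro ξ hξ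
    have hξS : ξ ∉ S := notMem_of_lt_csInf' (hζ ▸ hξ)
    obtain ⟨γ, hξγ, hγα, hγA⟩ : ∃ γ, ξ ≤ γ ∧ γ ≤ α ∧ γ ∈ A := by
      by_contra! h
      exact hξS ⟨hξ.le.trans hζα, h⟩
    exact ⟨γ, hγA, lt_of_not_ge fun hζγ ↦ hgap γ hζγ hγα hγA, hξγ⟩
  have hlim := isSuccLimit_of_cofinal_of_add_one_mem hpos.ne' hζA hsuccA hcof
  exact ⟨hpos, hlim, hcof, le_cof_of_cofinal_of_closed κ hlim hζA hclosed hcof⟩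

/-- Let `A ⊆ δ` contain `0`, be `<κ`-closed and successor-closed in `δ`.
If `α < δ` with `α ∉ A`, and `ζ` is least with `[ζ, α] ∩ A = ∅`, then `ζ > 0`,
`ζ` is limit, `A ∩ ζ` is cofinal in `ζ`, and `cf(ζ) ≥ κ`. -/
theorem least_gap_point (κ : Cardinal.{u}) (hreg : κ.IsRegular) (hunc : ℵ₀ < κ)
    (δ : Ordinal.{u}) (A : Set Ordinal.{u}) (hAsub : A ⊆ Set.Iio δ) (h0A : (0 : Ordinal) ∈ A)
    (hclosed : ∀ μ : Cardinal.{u}, μ.IsRegular → μ < κ →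
      ∀ g : μ.ord.ToType → Ordinal.{u}, StrictMono g → (∀ i, g i ∈ A) →
        sSup (Set.range g) ∈ insert δ A)
    (hsuccA : ∀ β ∈ A, β + 1 ∈ insert δ A)
    (α : Ordinal.{u}) (hα : α < δ) (hαA : α ∉ A)
    (ζ : Ordinal.{u})
    (hζ : ζ = sInf {ζ' | ζ' ≤ α ∧ ∀ γ, ζ' ≤ γ → γ ≤ α → γ ∉ A}) :
    0 < ζ ∧ Order.IsSuccLimit ζ ∧ (∀ ξ < ζ, ∃ η ∈ A, η < ζ ∧ ξ ≤ η) ∧ κ ≤ ζ.cof :=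
  least_gap_point_general κ δ A h0A hclosed hsuccA α hα hαA ζ hζ
end

section
/- Let κ be an uncountable regular cardinal, δ < κ⁺⁺ an ordinal, and s : δ → {κ, κ⁺} a function with s(0) = κ such that s⁻¹{κ} is <κ-closed and successor-closed in δ. Define J = {ζ < δ : s(ζ) = κ⁺ and cf(ζ) ∈ {κ, κ⁺}}, and for ζ ∈ J let f(ζ) = min((δ+1) \ (s⁻¹{κ⁺} ∪ ζ)). Then s⁻¹{κ⁺} = ⋃_{ζ ∈ J} [ζ, f(ζ)); that is, for every α < δ with s(α) = κ⁺, the ordinal ζ_α = min{ζ ≤ α : [ζ, α] ⊆ s⁻¹{κ⁺}} belongs to J and α < f(ζ_α), and conversely [ζ, f(ζ)) ⊆ s⁻¹{κ⁺} for every ζ ∈ J. -/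
/-!
Let `ζ` be the least start of the run of `κ⁺`-values ending at `α`. It is not `0` since
`s 0 = κ`, and not a successor since `s⁻¹{κ}` is successor-closed; so `κ`-points are unbounded
below the limit `ζ`. As `ζ < κ⁺⁺`, `cf ζ ≤ κ⁺`. If `cf ζ < κ`, a strictly increasing
`cf ζ`-sequence of `κ`-points converging to `ζ` would force `s ζ = κ` by `<κ`-closure; hence
`cf ζ ∈ {κ, κ⁺}`. The remaining claims only unfold the infima defining `ζ` and `f`.
-/

open Cardinal Ordinal Set Order

universe u

namespace Ordinal

theorem exists_strictMono_ord_cof_sSup_eq {ζ : Ordinal} {C : Set Ordinal}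
    (hC : ∀ θ < ζ, ∃ β ∈ C, θ < β ∧ β < ζ) :
    ∃ g : ζ.cof.ord.ToType → Ordinal, StrictMono g ∧ (∀ i, g i ∈ C ∧ g i < ζ) ∧
      sSup (range g) = ζ := by
  -- Inside the well-order `ζ.ToType`, `C` is cofinal and so contains a cofinal subset of order
  -- type `cf ζ`; `g` enumerates it.
  set A : Set ζ.ToType := {x | (ToType.mk.symm x).1 ∈ C}
  have hA : IsCofinal A := fun x ↦ by
    obtain ⟨β, hβC, hxβ, hβζ⟩ := hC _ (mem_Iio.1 (ToType.mk.symm x).2)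
    refine ⟨ToType.mk ⟨β, hβζ⟩, by simpa [A] using hβC, ?_⟩
    rw [← OrderIso.symm_apply_le]
    exact hxβ.le
  obtain ⟨t, htA, ht, htype⟩ := exists_ord_cof_eq_of_isCofinal hA
  rw [cof_toType, ← type_toType ζ.cof.ord] at htype
  let e : ζ.cof.ord.ToType ≃o t := .ofRelIsoLT (type_eq.1 htype).some.symm
  refine ⟨fun i ↦ (ToType.mk.symm (e i).1).1, ?_, fun i ↦ ⟨htA (e i).2, (ToType.mk.symm _).2⟩, ?_⟩
  · exact fun i j hij ↦ ToType.mk.symm.strictMono (e.strictMono hij)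
  · apply le_antisymm
    · exact csSup_le' (by rintro _ ⟨i, rfl⟩; exact ((ToType.mk.symm _).2 : _ < ζ).le)
    · refine le_of_forall_lt fun θ hθ ↦ ?_
      obtain ⟨β, -, hθβ, hβζ⟩ := hC θ hθ
      obtain ⟨z, hzt, hz⟩ := ht (ToType.mk ⟨β, hβζ⟩)
      refine hθβ.trans_le (le_csSup_of_le bddAbove_of_small ⟨e.symm ⟨z, hzt⟩, rfl⟩ ?_)
      rw [← OrderIso.le_symm_apply] at hz
      simpa only [e.apply_symm_apply] using Subtype.coe_le_coe.2 hz

theorem cof_le_of_lt_ord_succ {o : Ordinal} {c : Cardinal} (h : o < (succ c).ord) :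
    o.cof ≤ c :=
  (cof_le_card o).trans (lt_succ_iff.1 (lt_ord.1 h))

/-- `runStart P α` is the paper's `ζ_α`, and `runEnd P δ ζ` is `f(ζ) = min ((δ + 1) \ (P ∪ ζ))`. -/
noncomputable def runStart (P : Ordinal → Prop) (α : Ordinal) : Ordinal :=
  sInf {ζ | ζ ≤ α ∧ ∀ γ, ζ ≤ γ → γ ≤ α → P γ}

noncomputable def runEnd (P : Ordinal → Prop) (δ ζ : Ordinal) : Ordinal :=
  sInf {η | η ≤ δ ∧ ζ ≤ η ∧ (η < δ → ¬ P η)}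

variable {P : Ordinal → Prop} {α γ δ ζ θ : Ordinal}

theorem runStart_spec (hα : P α) :
    runStart P α ≤ α ∧ ∀ γ, runStart P α ≤ γ → γ ≤ α → P γ :=
  csInf_mem (s := {ζ | ζ ≤ α ∧ ∀ γ, ζ ≤ γ → γ ≤ α → P γ})
    ⟨α, le_rfl, fun _ hαγ hγα ↦ le_antisymm hγα hαγ ▸ hα⟩

theorem exists_not_of_lt_runStart (hα : P α) (hθ : θ < runStart P α) :
    ∃ β, θ ≤ β ∧ β < runStart P α ∧ ¬ P β := by
  by_contra! h
  obtain ⟨hζα, hrun⟩ := runStart_spec hα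
  have hθ_mem : θ ∈ {ζ | ζ ≤ α ∧ ∀ γ, ζ ≤ γ → γ ≤ α → P γ} :=
    ⟨hθ.le.trans hζα, fun γ hθγ hγα ↦
      (lt_or_ge γ (runStart P α)).elim (h γ hθγ) (hrun γ · hγα)⟩
  exact notMem_of_lt_csInf' hθ hθ_mem

theorem lt_runEnd (hζα : ζ ≤ α) (hαδ : α < δ) (hrun : ∀ γ, ζ ≤ γ → γ ≤ α → P γ) :
    α < runEnd P δ ζ := by
  by_contra! hle
  obtain ⟨-, hζη, hη⟩ := csInf_mem (s := {η | η ≤ δ ∧ ζ ≤ η ∧ (η < δ → ¬ P η)})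
    ⟨δ, le_rfl, hζα.trans hαδ.le, fun h ↦ (lt_irrefl δ h).elim⟩
  exact hη (hle.trans_lt hαδ) (hrun _ hζη hle)

theorem lt_and_of_lt_runEnd (hζδ : ζ ≤ δ) (hζγ : ζ ≤ γ) (hγ : γ < runEnd P δ ζ) :
    γ < δ ∧ P γ := by
  unfold runEnd at hγ
  have hγδ : γ < δ := hγ.trans_le (csInf_le' ⟨le_rfl, hζδ, fun h ↦ (lt_irrefl δ h).elim⟩)
  exact ⟨hγδ, by_contra fun hP ↦ notMem_of_lt_csInf' hγ ⟨hγδ.le, hζγ, fun _ ↦ hP⟩⟩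

end Ordinal

open Ordinal

section
variable {κ : Cardinal} {δ α : Ordinal} {s : Ordinal → Cardinal}

theorem isSuccLimit_runStart (hsval : ∀ α < δ, s α = κ ∨ s α = succ κ) (hs0 : s 0 = κ)
    (hsucc : ∀ β < δ, s β = κ → β + 1 = δ ∨ (β + 1 < δ ∧ s (β + 1) = κ))
    (hαδ : α < δ) (hα : s α = succ κ) : IsSuccLimit (runStart (s · = succ κ) α) := by
  obtain ⟨hζα, hrun⟩ := runStart_spec (P := (s · = succ κ)) hα
  set ζ := runStart (s · = succ κ) α
  have hsζ : s ζ = succ κ := hrun ζ le_rfl hζα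
  rcases zero_or_succ_or_isSuccLimit ζ with hζ | ⟨β, hβ⟩ | hζ
  · rw [hζ, hs0] at hsζ
    exact absurd hsζ (lt_succ κ).ne
  · have hsβ : ¬ s β = succ κ := by
      obtain ⟨γ, hβγ, hγζ, hγ⟩ := exists_not_of_lt_runStart hα (hβ ▸ lt_succ β)
      rwa [le_antisymm (lt_succ_iff.1 (hβ ▸ hγζ)) hβγ] at hγ
    have hβδ : β < δ := (lt_succ β).trans_le (hβ ▸ hζα) |>.trans hαδ
    rw [← hβ, succ_eq_add_one] at hζα hsζ
    rcases hsucc β hβδ ((hsval β hβδ).resolve_right hsβ) with h | ⟨-, h⟩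
    · exact absurd (hζα.trans_lt hαδ) (h ▸ lt_irrefl δ)
    · exact absurd (h.symm.trans hsζ) (lt_succ κ).ne
  · exact hζ

theorem le_cof_runStart (hsval : ∀ α < δ, s α = κ ∨ s α = succ κ)
    (hclosed : ∀ μ : Cardinal, ℵ₀ ≤ μ → μ < κ →
      ∀ g : μ.ord.ToType → Ordinal, StrictMono g →
        (∀ i, g i < δ ∧ s (g i) = κ) →
        sSup (range g) = δ ∨ (sSup (range g) < δ ∧ s (sSup (range g)) = κ))
    (hαδ : α < δ) (hα : s α = succ κ) (hlim : IsSuccLimit (runStart (s · = succ κ) α)) :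
    κ ≤ (runStart (s · = succ κ) α).cof := by
  obtain ⟨hζα, hrun⟩ := runStart_spec (P := (s · = succ κ)) hα
  set ζ := runStart (s · = succ κ) α
  have hζδ : ζ < δ := hζα.trans_lt hαδ
  have hunbounded : ∀ θ < ζ, ∃ β ∈ {β | s β = κ}, θ < β ∧ β < ζ := fun θ hθ ↦ by
    obtain ⟨β, hθβ, hβζ, hβ⟩ := exists_not_of_lt_runStart hα (hlim.succ_lt hθ)
    exact ⟨β, (hsval β (hβζ.trans hζδ)).resolve_right hβ, (lt_succ θ).trans_le hθβ, hβζ⟩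
  by_contra! hcof
  obtain ⟨g, hg, hgζ, hsup⟩ := exists_strictMono_ord_cof_sSup_eq hunbounded
  rcases hclosed _ (aleph0_le_cof_iff.2 (one_lt_cof_iff.2 hlim)) hcof g hg
    (fun i ↦ ⟨(hgζ i).2.trans hζδ, (hgζ i).1⟩) with h | ⟨-, h⟩
  · exact hζδ.ne (hsup ▸ h)
  · rw [hsup, hrun ζ le_rfl hζα] at h
    exact (lt_succ κ).ne h.symm

end

theorem kappa_plus_part_is_union_of_intervals_general
    (κ : Cardinal.{u})
    (δ : Ordinal.{u}) (hδ : δ < (Order.succ (Order.succ κ)).ord)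
    (s : Ordinal.{u} → Cardinal.{u})
    (hsval : ∀ α < δ, s α = κ ∨ s α = Order.succ κ)
    (hs0 : s 0 = κ)
    (hclosed : ∀ μ : Cardinal.{u}, ℵ₀ ≤ μ → μ < κ →
      ∀ g : μ.ord.ToType → Ordinal.{u}, StrictMono g →
        (∀ i, g i < δ ∧ s (g i) = κ) →
        sSup (Set.range g) = δ ∨ (sSup (Set.range g) < δ ∧ s (sSup (Set.range g)) = κ))
    (hsucc : ∀ β < δ, s β = κ → β + 1 = δ ∨ (β + 1 < δ ∧ s (β + 1) = κ))
    (J : Set Ordinal.{u})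
    (hJ : J = {ζ | ζ < δ ∧ s ζ = Order.succ κ ∧ (ζ.cof = κ ∨ ζ.cof = Order.succ κ)})
    (f : Ordinal.{u} → Ordinal.{u})
    (hf : ∀ ζ ∈ J, f ζ = sInf {η | η ≤ δ ∧ ζ ≤ η ∧ (η < δ → s η ≠ Order.succ κ)}) :
    (∀ α < δ, s α = Order.succ κ →
      sInf {ζ | ζ ≤ α ∧ ∀ γ, ζ ≤ γ → γ ≤ α → s γ = Order.succ κ} ∈ J ∧
      α < f (sInf {ζ | ζ ≤ α ∧ ∀ γ, ζ ≤ γ → γ ≤ α → s γ = Order.succ κ})) ∧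
    (∀ ζ ∈ J, ∀ γ, ζ ≤ γ → γ < f ζ → γ < δ ∧ s γ = Order.succ κ) := by
  refine ⟨fun α hαδ hα ↦ ?_, fun ζ hζ γ hζγ hγ ↦ ?_⟩
  · obtain ⟨hζα, hrun⟩ := runStart_spec (P := (s · = succ κ)) hα
    set ζ := runStart (s · = succ κ) α
    have hζδ := hζα.trans_lt hαδ
    have hlim := isSuccLimit_runStart hsval hs0 hsucc hαδ hα
    have hκ_le := le_cof_runStart hsval hclosed hαδ hα hlim
    have hle_succ := cof_le_of_lt_ord_succ (hζδ.trans hδ)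
    have hcof : ζ.cof = κ ∨ ζ.cof = succ κ :=
      (le_succ_iff_eq_or_le.1 hle_succ).symm.imp hκ_le.antisymm' id
    have hζJ : ζ ∈ J := hJ ▸ ⟨hζδ, hrun _ le_rfl hζα, hcof⟩
    exact ⟨hζJ, hf _ hζJ ▸ lt_runEnd hζα hαδ hrun⟩
  · rw [hf ζ hζ] at hγ
    exact lt_and_of_lt_runEnd (hJ ▸ hζ).1.le hζγ hγ

/-- For `s : δ → {κ, κ⁺}` with `s(0) = κ` and `s⁻¹{κ}` `<κ`-closed and
successor-closed in `δ < κ⁺⁺`, the set `s⁻¹{κ⁺}` is the union of the intervals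
`[ζ, f(ζ))` for `ζ ∈ J = {ζ : s(ζ) = κ⁺, cf(ζ) ∈ {κ, κ⁺}}`. -/
theorem kappa_plus_part_is_union_of_intervals
    (κ : Cardinal.{u}) (hreg : κ.IsRegular) (hunc : ℵ₀ < κ)
    (δ : Ordinal.{u}) (hδpos : 0 < δ) (hδ : δ < (Order.succ (Order.succ κ)).ord)
    (s : Ordinal.{u} → Cardinal.{u})
    (hsval : ∀ α < δ, s α = κ ∨ s α = Order.succ κ)
    (hs0 : s 0 = κ)
    (hclosed : ∀ μ : Cardinal.{u}, ℵ₀ ≤ μ → μ < κ →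
      ∀ g : μ.ord.ToType → Ordinal.{u}, StrictMono g →
        (∀ i, g i < δ ∧ s (g i) = κ) →
        sSup (Set.range g) = δ ∨ (sSup (Set.range g) < δ ∧ s (sSup (Set.range g)) = κ))
    (hsucc : ∀ β < δ, s β = κ → β + 1 = δ ∨ (β + 1 < δ ∧ s (β + 1) = κ))
    (J : Set Ordinal.{u})
    (hJ : J = {ζ | ζ < δ ∧ s ζ = Order.succ κ ∧ (ζ.cof = κ ∨ ζ.cof = Order.succ κ)})
    (f : Ordinal.{u} → Ordinal.{u})
    (hf : ∀ ζ ∈ J, f ζ = sInf {η | η ≤ δ ∧ ζ ≤ η ∧ (η < δ → s η ≠ Order.succ κ)}) :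
    (∀ α < δ, s α = Order.succ κ →
      sInf {ζ | ζ ≤ α ∧ ∀ γ, ζ ≤ γ → γ ≤ α → s γ = Order.succ κ} ∈ J ∧
      α < f (sInf {ζ | ζ ≤ α ∧ ∀ γ, ζ ≤ γ → γ ≤ α → s γ = Order.succ κ})) ∧
    (∀ ζ ∈ J, ∀ γ, ζ ≤ γ → γ < f ζ → γ < δ ∧ s γ = Order.succ κ) :=
  kappa_plus_part_is_union_of_intervals_general κ δ hδ s hsval hs0 hclosed hsucc J hJ f hf
end

section
/- Let A_p and A_q be sets with A = A_p ∩ A_q, let ≼_p be a partial order on A_p and ≼_q a partial order on A_q such that ≼_p and ≼_q agree on A (i.e., for x, y ∈ A, x ≼_p y iff x ≼_q y). Suppose there is a function π from A_p ∪ A_q to the ordinals such that x ≼_p y implies x = y or π(x) < π(y), and likewise for ≼_q. Define the relation ≼_{p,q} on A_p ∪ A_q by: x ≼_{p,q} y iff there exists z ∈ A_p ∪ A_q with (x ≼_p z or x ≼_q z) and (z ≼_p y or z ≼_q y). Then ≼_{p,q} is a partial order on A_p ∪ A_q, and it is the smallest partial order containing ≼_p ∪ ≼_q. -/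
/-!
Every link of `rp ⊔ rq` is either an equality or strictly raises the rank `π`, so the same holds
for two-link chains; hence `≼_{p,q}` is antisymmetric. For transitivity, a chain of three links
shortens to two: two adjacent links of the same order merge by transitivity, and in an
alternating chain `p, q, p` the middle `q`-link has both ends in `A_p ∩ A_q` (they are ends of
`p`-links), where it is also a `p`-link.
-/

open Set Relation

namespace Amalgamation

variable {X β : Type*}

def RankedBy [Preorder β] (f : X → β) (r : X → X → Prop) : Prop :=
  ∀ x y, r x y → x = y ∨ f x < f y

namespace RankedBy

variable [Preorder β] {f : X → β} {r s : X → X → Prop}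

theorem sup (hr : RankedBy f r) (hs : RankedBy f s) : RankedBy f (r ⊔ s) := by
  rintro x y (h | h)
  exacts [hr x y h, hs x y h]

theorem comp (hr : RankedBy f r) (hs : RankedBy f s) : RankedBy f (Comp r s) := by
  rintro x z ⟨y, hxy, hyz⟩
  rcases hr x y hxy with rfl | hlt
  · exact hs x z hyz
  · rcases hs y z hyz with rfl | hlt'
    exacts [Or.inr hlt, Or.inr (hlt.trans hlt')]

theorem antisymm (hr : RankedBy f r) {x y : X} (hxy : r x y) (hyx : r y x) : x = y := by
  rcases hr x y hxy with rfl | hlt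
  · rfl
  · rcases hr y x hyx with rfl | hlt'
    exacts [rfl, absurd (hlt.trans hlt') (lt_irrefl _)]

end RankedBy

variable {Ap Aq : Set X} {rp rq : X → X → Prop}

theorem rel_trans_of_mem (hp_dom : ∀ x y, rp x y → x ∈ Ap ∧ y ∈ Ap)
    (hp_trans : ∀ x y z, rp x y → rp y z → rp x z) (hq_dom : ∀ x y, rq x y → x ∈ Aq ∧ y ∈ Aq)
    (hagree : ∀ x ∈ Ap ∩ Aq, ∀ y ∈ Ap ∩ Aq, (rp x y ↔ rq x y)) {a b c : X}
    (hab : rp a b) (hbc : rq b c) (hc : c ∈ Ap) : rp a c := by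
  have hb : b ∈ Ap ∩ Aq := ⟨(hp_dom a b hab).2, (hq_dom b c hbc).1⟩
  exact hp_trans a b c hab ((hagree b hb c ⟨hc, (hq_dom b c hbc).2⟩).2 hbc)

theorem comp_sup_of_three_links (hp_dom : ∀ x y, rp x y → x ∈ Ap ∧ y ∈ Ap)
    (hp_trans : ∀ x y z, rp x y → rp y z → rp x z) (hq_dom : ∀ x y, rq x y → x ∈ Aq ∧ y ∈ Aq)
    (hq_trans : ∀ x y z, rq x y → rq y z → rq x z)
    (hagree : ∀ x ∈ Ap ∩ Aq, ∀ y ∈ Ap ∩ Aq, (rp x y ↔ rq x y)) {a b c d : X}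
    (hab : (rp ⊔ rq) a b) (hbc : (rp ⊔ rq) b c) (hcd : (rp ⊔ rq) c d) :
    Comp (rp ⊔ rq) (rp ⊔ rq) a d := by
  have hagree' : ∀ x ∈ Aq ∩ Ap, ∀ y ∈ Aq ∩ Ap, (rq x y ↔ rp x y) := fun x hx y hy =>
    (hagree x (inter_comm Aq Ap ▸ hx) y (inter_comm Aq Ap ▸ hy)).symm
  rcases hab with hab | hab <;> rcases hbc with hbc | hbc <;> rcases hcd with hcd | hcd
  · exact ⟨c, Or.inl (hp_trans a b c hab hbc), Or.inl hcd⟩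
  · exact ⟨c, Or.inl (hp_trans a b c hab hbc), Or.inr hcd⟩
  · exact ⟨c, Or.inl (rel_trans_of_mem hp_dom hp_trans hq_dom hagree hab hbc
      (hp_dom c d hcd).1), Or.inl hcd⟩
  · exact ⟨b, Or.inl hab, Or.inr (hq_trans b c d hbc hcd)⟩
  · exact ⟨b, Or.inr hab, Or.inl (hp_trans b c d hbc hcd)⟩
  · exact ⟨c, Or.inr (rel_trans_of_mem hq_dom hq_trans hp_dom hagree' hab hbc
      (hq_dom c d hcd).1), Or.inr hcd⟩
  · exact ⟨c, Or.inr (hq_trans a b c hab hbc), Or.inl hcd⟩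
  · exact ⟨c, Or.inr (hq_trans a b c hab hbc), Or.inr hcd⟩

theorem comp_sup_trans (hp_dom : ∀ x y, rp x y → x ∈ Ap ∧ y ∈ Ap)
    (hp_trans : ∀ x y z, rp x y → rp y z → rp x z) (hq_dom : ∀ x y, rq x y → x ∈ Aq ∧ y ∈ Aq)
    (hq_trans : ∀ x y z, rq x y → rq y z → rq x z)
    (hagree : ∀ x ∈ Ap ∩ Aq, ∀ y ∈ Ap ∩ Aq, (rp x y ↔ rq x y)) {x y z : X}
    (hxy : Comp (rp ⊔ rq) (rp ⊔ rq) x y) (hyz : Comp (rp ⊔ rq) (rp ⊔ rq) y z) :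
    Comp (rp ⊔ rq) (rp ⊔ rq) x z := by
  obtain ⟨u, hxu, huy⟩ := hxy
  obtain ⟨v, hyv, hvz⟩ := hyz
  obtain ⟨w, hxw, hwv⟩ :=
    comp_sup_of_three_links hp_dom hp_trans hq_dom hq_trans hagree hxu huy hyv
  exact comp_sup_of_three_links hp_dom hp_trans hq_dom hq_trans hagree hxw hwv hvz

theorem sup_refl_of_mem_union (hp_refl : ∀ x ∈ Ap, rp x x) (hq_refl : ∀ x ∈ Aq, rq x x) {x : X}
    (hx : x ∈ Ap ∪ Aq) : (rp ⊔ rq) x x :=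
  hx.imp (hp_refl x) (hq_refl x)

theorem mem_union_of_sup (hp_dom : ∀ x y, rp x y → x ∈ Ap ∧ y ∈ Ap)
    (hq_dom : ∀ x y, rq x y → x ∈ Aq ∧ y ∈ Aq) {x y : X} (h : (rp ⊔ rq) x y) :
    x ∈ Ap ∪ Aq ∧ y ∈ Ap ∪ Aq := by
  rcases h with h | h
  exacts [⟨.inl (hp_dom x y h).1, .inl (hp_dom x y h).2⟩,
    ⟨.inr (hq_dom x y h).1, .inr (hq_dom x y h).2⟩]

end Amalgamation

open Amalgamation

theorem amalgamated_partial_order_general {X : Type*}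
    (Ap Aq : Set X) (rp rq : X → X → Prop)
    (hp_refl : ∀ x ∈ Ap, rp x x) (hp_dom : ∀ x y, rp x y → x ∈ Ap ∧ y ∈ Ap)
    (hp_trans : ∀ x y z, rp x y → rp y z → rp x z)
    (hq_refl : ∀ x ∈ Aq, rq x x) (hq_dom : ∀ x y, rq x y → x ∈ Aq ∧ y ∈ Aq)
    (hq_trans : ∀ x y z, rq x y → rq y z → rq x z)
    (hagree : ∀ x ∈ Ap ∩ Aq, ∀ y ∈ Ap ∩ Aq, (rp x y ↔ rq x y))
    (π : X → Ordinal)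
    (hπp : ∀ x y, rp x y → x = y ∨ π x < π y)
    (hπq : ∀ x y, rq x y → x = y ∨ π x < π y)
    (rpq : X → X → Prop)
    (hrpq : ∀ x y, rpq x y ↔ ∃ z, (rp x z ∨ rq x z) ∧ (rp z y ∨ rq z y)) :
    (∀ x ∈ Ap ∪ Aq, rpq x x) ∧
    (∀ x y, rpq x y → x ∈ Ap ∪ Aq ∧ y ∈ Ap ∪ Aq) ∧
    (∀ x y, rpq x y → rpq y x → x = y) ∧
    (∀ x y z, rpq x y → rpq y z → rpq x z) ∧
    (∀ x y, rp x y ∨ rq x y → rpq x y) ∧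
    (∀ r' : X → X → Prop,
      (∀ x ∈ Ap ∪ Aq, r' x x) → (∀ x y, r' x y → r' y x → x = y) →
      (∀ x y z, r' x y → r' y z → r' x z) →
      (∀ x y, rp x y ∨ rq x y → r' x y) →
      ∀ x y, rpq x y → r' x y) := by
  obtain rfl : rpq = Comp (rp ⊔ rq) (rp ⊔ rq) := funext₂ fun x y => propext (hrpq x y)
  have hrefl {x} (hx : x ∈ Ap ∪ Aq) : (rp ⊔ rq) x x := sup_refl_of_mem_union hp_refl hq_refl hx
  have hrank : RankedBy π (Comp (rp ⊔ rq) (rp ⊔ rq)) :=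
    (RankedBy.sup hπp hπq).comp (RankedBy.sup hπp hπq)
  refine ⟨fun x hx => ⟨x, hrefl hx, hrefl hx⟩, ?_, fun x y => hrank.antisymm,
    fun x y z => comp_sup_trans hp_dom hp_trans hq_dom hq_trans hagree,
    fun x y hxy => ⟨y, hxy, hrefl (mem_union_of_sup hp_dom hq_dom hxy).2⟩, ?_⟩
  · rintro x y ⟨z, hxz, hzy⟩
    exact ⟨(mem_union_of_sup hp_dom hq_dom hxz).1, (mem_union_of_sup hp_dom hq_dom hzy).2⟩
  · rintro r' - - htrans hle x y ⟨z, hxz, hzy⟩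
    exact htrans x z y (hle x z hxz) (hle z y hzy)

/-- Amalgamation of two compatible partial orders on `A_p` and `A_q` agreeing on
`A = A_p ∩ A_q`, graded by an ordinal-valued rank `π`: the relation `≼_{p,q}`
given by a common intermediate point is the smallest partial order on `A_p ∪ A_q`
containing both. -/
theorem amalgamated_partial_order {X : Type*}
    (Ap Aq : Set X) (rp rq : X → X → Prop)
    (hp_refl : ∀ x ∈ Ap, rp x x) (hp_dom : ∀ x y, rp x y → x ∈ Ap ∧ y ∈ Ap)
    (hp_antisymm : ∀ x y, rp x y → rp y x → x = y)
    (hp_trans : ∀ x y z, rp x y → rp y z → rp x z)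
    (hq_refl : ∀ x ∈ Aq, rq x x) (hq_dom : ∀ x y, rq x y → x ∈ Aq ∧ y ∈ Aq)
    (hq_antisymm : ∀ x y, rq x y → rq y x → x = y)
    (hq_trans : ∀ x y z, rq x y → rq y z → rq x z)
    (hagree : ∀ x ∈ Ap ∩ Aq, ∀ y ∈ Ap ∩ Aq, (rp x y ↔ rq x y))
    (π : X → Ordinal)
    (hπp : ∀ x y, rp x y → x = y ∨ π x < π y)
    (hπq : ∀ x y, rq x y → x = y ∨ π x < π y)
    (rpq : X → X → Prop)
    (hrpq : ∀ x y, rpq x y ↔ ∃ z, (rp x z ∨ rq x z) ∧ (rp z y ∨ rq z y)) :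
    (∀ x ∈ Ap ∪ Aq, rpq x x) ∧
    (∀ x y, rpq x y → x ∈ Ap ∪ Aq ∧ y ∈ Ap ∪ Aq) ∧
    (∀ x y, rpq x y → rpq y x → x = y) ∧
    (∀ x y z, rpq x y → rpq y z → rpq x z) ∧
    (∀ x y, rp x y ∨ rq x y → rpq x y) ∧
    (∀ r' : X → X → Prop,
      (∀ x ∈ Ap ∪ Aq, r' x x) → (∀ x y, r' x y → r' y x → x = y) →
      (∀ x y z, r' x y → r' y z → r' x z) →
      (∀ x y, rp x y ∨ rq x y → r' x y) →
      ∀ x y, rpq x y → r' x y) :=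
  amalgamated_partial_order_general Ap Aq rp rq hp_refl hp_dom hp_trans hq_refl hq_dom hq_trans
    hagree π hπp hπq rpq hrpq
end

section
/- Let δ be an ordinal and define a tree of ordinal intervals as follows: 𝓘₀ = {[0, δ)}, and 𝓘_{n+1} = ⋃{part(I) : I ∈ 𝓘_n}, where for an interval I = [α, β): if β is a limit ordinal, part(I) = {[ε_ν, ε_{ν+1}) : ν < cf(β)} for a fixed closed cofinal subset {ε_ν : ν < cf(β)} of I of order type cf(β) with ε_0 = α; and if β = β' + 1, part(I) = {[α, β'), {β'}}. Then for every α < δ and every n < ω there is a unique interval I(α, n) ∈ 𝓘_n containing α, and I(α, n+1) ⊆ I(α, n); moreover, there exists n < ω and I ∈ 𝓘_n with min(I) = α. -/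
open Cardinal Ordinal Set

universe u

/-!
Each `part (Ico a b)` with `a < b` partitions `[a, b)` into nonempty intervals `[c, d)`; at a
limit `b` these are the blocks `[e ν, e (ν + 1))`, and `α` lies in the one with `ν + 1` least
such that `α < e (ν + 1)`. By induction on `n`, every interval of level `n` is then a nonempty
`[a, b)`, and each `α < δ` lies in exactly one of them, inside the one of the level before.

Moreover the block of `α` in `part (Ico a b)` starts at `α` or ends strictly before `b`: at a
limit `b` every block ends at some `e (ν + 1) < b`, and at `b = c + 1` the only block reaching `b`
is `[c, c + 1)`. As the ordinals are well-founded, the right endpoints of the intervals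
containing `α` cannot decrease forever, so `α` eventually is the left endpoint of its interval.
-/

open Order

theorem exists_mem_Ico_add_one_of_continuous {κ α : Ordinal.{u}} {e : Ordinal.{u} → Ordinal.{u}}
    (hcont : ∀ l < κ, IsSuccLimit l → e l = sSup (e '' Iio l)) (he0 : e 0 ≤ α)
    (hα : ∃ ν < κ, α < e ν) : ∃ ν, ν + 1 < κ ∧ α ∈ Ico (e ν) (e (ν + 1)) := by
  -- the least `μ` with `α < e μ` is not `0` as `e 0 ≤ α`, nor a limit by continuity
  set S := {ν | ν < κ ∧ α < e ν}
  have hμ : sInf S ∈ S := csInf_mem hα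
  have hbelow : ∀ ν < sInf S, e ν ≤ α := fun ν hν =>
    not_lt.1 fun h => notMem_of_lt_csInf' hν ⟨hν.trans hμ.1, h⟩
  rcases zero_or_succ_or_isSuccLimit (sInf S) with h0 | ⟨ν, hν⟩ | hlim
  · exact absurd he0 (not_le.2 (h0 ▸ hμ.2))
  · rw [succ_eq_add_one] at hν
    refine ⟨ν, hν ▸ hμ.1, hbelow ν (hν ▸ lt_add_one ν), hν ▸ hμ.2⟩
  · refine absurd hμ.2 (not_lt.2 ?_)
    rw [hcont _ hμ.1 hlim]
    exact csSup_le' (forall_mem_image.2 hbelow)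

theorem StrictMonoOn.eq_of_mem_Ico_add_one {κ α μ ν : Ordinal.{u}} {e : Ordinal.{u} → Ordinal.{u}}
    (he : StrictMonoOn e (Iio κ)) (hμ : μ + 1 < κ) (hν : ν + 1 < κ)
    (hαμ : α ∈ Ico (e μ) (e (μ + 1))) (hαν : α ∈ Ico (e ν) (e (ν + 1))) : μ = ν := by
  wlog hle : μ ≤ ν generalizing μ ν
  · exact (this hν hμ hαν hαμ (le_of_not_ge hle)).symm
  refine hle.eq_or_lt.resolve_right fun hlt => (hαμ.2.trans_le ?_).false
  exact (he.monotoneOn hμ ((lt_add_one ν).trans hν) (add_one_le_of_lt hlt)).trans hαν.1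

structure IsIcoPartition (P : Set (Set Ordinal.{u})) (a b : Ordinal.{u}) : Prop where
  exists_eq_Ico : ∀ J ∈ P, ∃ c d, a ≤ c ∧ c < d ∧ d ≤ b ∧ J = Ico c d
  existsUnique_mem : ∀ α ∈ Ico a b, ∃! J, J ∈ P ∧ α ∈ J
  exists_left_eq_or_right_lt :
    ∀ α ∈ Ico a b, ∃ c d, Ico c d ∈ P ∧ α ∈ Ico c d ∧ (c = α ∨ d < b)

theorem isIcoPartition_singleton (b : Ordinal.{u}) :
    IsIcoPartition {Ico b (b + 1)} b (b + 1) where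
  exists_eq_Ico _ hJ := ⟨b, b + 1, le_rfl, lt_add_one b, le_rfl, hJ⟩
  existsUnique_mem _ hα := ⟨_, ⟨rfl, hα⟩, fun _ hJ => hJ.1⟩
  exists_left_eq_or_right_lt _ hα :=
    ⟨b, b + 1, rfl, hα, .inl (le_antisymm hα.1 (lt_add_one_iff.1 hα.2))⟩

theorem isIcoPartition_pair {a c : Ordinal.{u}} (hac : a < c) :
    IsIcoPartition {Ico a c, Ico c (c + 1)} a (c + 1) where
  exists_eq_Ico J := by
    rintro (rfl | rfl)
    · exact ⟨a, c, le_rfl, hac, (lt_add_one c).le, rfl⟩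
    · exact ⟨c, c + 1, hac.le, lt_add_one c, le_rfl, rfl⟩
  existsUnique_mem α hα := by
    rcases lt_or_ge α c with hαc | hcα
    · refine ⟨_, ⟨.inl rfl, hα.1, hαc⟩, ?_⟩
      rintro J ⟨rfl | rfl, hαJ⟩
      exacts [rfl, absurd hαJ.1 (not_le.2 hαc)]
    · refine ⟨_, ⟨.inr rfl, hcα, hα.2⟩, ?_⟩
      rintro J ⟨rfl | rfl, hαJ⟩
      exacts [absurd hαJ.2 (not_lt.2 hcα), rfl]
  exists_left_eq_or_right_lt α hα := by
    rcases lt_or_ge α c with hαc | hcα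
    · exact ⟨a, c, .inl rfl, ⟨hα.1, hαc⟩, .inr (lt_add_one c)⟩
    · exact ⟨c, c + 1, .inr rfl, ⟨hcα, hα.2⟩,
        .inl (le_antisymm hcα (lt_add_one_iff.1 hα.2))⟩

theorem isIcoPartition_of_cofinal {a b κ : Ordinal.{u}} {e : Ordinal.{u} → Ordinal.{u}}
    (hb : IsSuccLimit b) (hκ : IsSuccLimit κ) (hmono : StrictMonoOn e (Iio κ)) (he0 : e 0 = a)
    (hrange : ∀ ν < κ, e ν ∈ Ico a b) (hcof : ∀ ξ < b, ∃ ν < κ, ξ ≤ e ν)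
    (hcont : ∀ l < κ, IsSuccLimit l → e l = sSup (e '' Iio l)) :
    IsIcoPartition {J | ∃ ν < κ, J = Ico (e ν) (e (ν + 1))} a b := by
  have hblock : ∀ α ∈ Ico a b, ∃ ν, ν + 1 < κ ∧ α ∈ Ico (e ν) (e (ν + 1)) := fun α hα =>
    exists_mem_Ico_add_one_of_continuous hcont (he0 ▸ hα.1) <| by
      obtain ⟨ν, hν, hle⟩ := hcof (α + 1) (hb.add_one_lt hα.2)
      exact ⟨ν, hν, (lt_add_one α).trans_le hle⟩
  refine ⟨?_, fun α hα => ?_, fun α hα => ?_⟩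
  · rintro J ⟨ν, hν, rfl⟩
    have hν1 := hκ.add_one_lt hν
    exact ⟨e ν, e (ν + 1), (hrange ν hν).1, hmono hν hν1 (lt_add_one ν), (hrange _ hν1).2.le, rfl⟩
  · obtain ⟨ν, hν, hαν⟩ := hblock α hα
    refine ⟨_, ⟨⟨ν, (lt_add_one ν).trans hν, rfl⟩, hαν⟩, ?_⟩
    rintro J ⟨⟨μ, hμ, rfl⟩, hαμ⟩
    rw [hmono.eq_of_mem_Ico_add_one (hκ.add_one_lt hμ) hν hαμ hαν]
  · obtain ⟨ν, hν, hαν⟩ := hblock α hα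
    exact ⟨e ν, e (ν + 1), ⟨ν, (lt_add_one ν).trans hν, rfl⟩, hαν, .inr (hrange _ hν).2⟩

def SplitsIco (part : Set Ordinal.{u} → Set (Set Ordinal.{u})) : Prop :=
  ∀ a b, a < b → IsIcoPartition (part (Ico a b)) a b

theorem splitsIco_of_cases {part : Set Ordinal.{u} → Set (Set Ordinal.{u})}
    (hpart_single : ∀ b : Ordinal.{u}, part (Ico b (b + 1)) = {Ico b (b + 1)})
    (hpart_succ : ∀ a b : Ordinal.{u}, a < b → part (Ico a (b + 1)) = {Ico a b, Ico b (b + 1)})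
    (hpart_limit : ∀ a b : Ordinal.{u}, a < b → IsSuccLimit b →
      ∃ e : Ordinal.{u} → Ordinal.{u},
        StrictMonoOn e (Iio b.cof.ord) ∧ e 0 = a ∧
        (∀ ν < b.cof.ord, e ν ∈ Ico a b) ∧
        (∀ ξ < b, ∃ ν < b.cof.ord, ξ ≤ e ν) ∧
        (∀ l < b.cof.ord, IsSuccLimit l → e l = sSup (e '' Iio l)) ∧
        part (Ico a b) = {J | ∃ ν < b.cof.ord, J = Ico (e ν) (e (ν + 1))}) :
    SplitsIco part := by
  intro a b hab
  rcases zero_or_succ_or_isSuccLimit b with rfl | ⟨c, rfl⟩ | hb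
  · exact absurd hab not_lt_zero
  · rw [succ_eq_add_one] at hab ⊢
    rcases (lt_add_one_iff.1 hab).eq_or_lt with rfl | hac
    · exact hpart_single a ▸ isIcoPartition_singleton a
    · exact hpart_succ a c hac ▸ isIcoPartition_pair hac
  · obtain ⟨e, hmono, he0, hrange, hcof, hcont, hpart⟩ := hpart_limit a b hab hb
    have hκ : IsSuccLimit b.cof.ord :=
      isSuccLimit_ord (aleph0_le_cof_iff.2 (one_lt_cof_iff.2 hb))
    exact hpart ▸ isIcoPartition_of_cofinal hb hκ hmono he0 hrange hcof hcont

structure IsIntervalTree (δ : Ordinal.{u}) (part : Set Ordinal.{u} → Set (Set Ordinal.{u}))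
    (ℐ : ℕ → Set (Set Ordinal.{u})) : Prop where
  zero : ℐ 0 = {Iio δ}
  succ : ∀ n, ℐ (n + 1) = ⋃ I ∈ ℐ n, part I

namespace IsIntervalTree

variable {δ : Ordinal.{u}} {part : Set Ordinal.{u} → Set (Set Ordinal.{u})}
  {ℐ : ℕ → Set (Set Ordinal.{u})}

theorem mem_succ_iff (hℐ : IsIntervalTree δ part ℐ) {n : ℕ} {J : Set Ordinal.{u}} :
    J ∈ ℐ (n + 1) ↔ ∃ I ∈ ℐ n, J ∈ part I := by
  simp only [hℐ.succ, mem_iUnion₂, exists_prop]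

theorem zero_eq_Ico (hℐ : IsIntervalTree δ part ℐ) : ℐ 0 = {Ico 0 δ} := by
  rw [hℐ.zero, ← bot_eq_zero, Ico_bot]

theorem exists_eq_Ico (hℐ : IsIntervalTree δ part ℐ) (hpart : SplitsIco part) (hδ : 0 < δ) :
    ∀ n, ∀ I ∈ ℐ n, ∃ a b, a < b ∧ I = Ico a b
  | 0, I, hI => ⟨0, δ, hδ, by rwa [hℐ.zero_eq_Ico] at hI⟩
  | n + 1, J, hJ => by
    obtain ⟨I, hI, hJI⟩ := hℐ.mem_succ_iff.1 hJ
    obtain ⟨a, b, hab, rfl⟩ := hℐ.exists_eq_Ico hpart hδ n I hI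
    obtain ⟨c, d, -, hcd, -, rfl⟩ := (hpart a b hab).exists_eq_Ico J hJI
    exact ⟨c, d, hcd, rfl⟩

theorem exists_parent (hℐ : IsIntervalTree δ part ℐ) (hpart : SplitsIco part) (hδ : 0 < δ)
    {n : ℕ} {J : Set Ordinal.{u}} (hJ : J ∈ ℐ (n + 1)) : ∃ I ∈ ℐ n, J ∈ part I ∧ J ⊆ I := by
  obtain ⟨I, hI, hJI⟩ := hℐ.mem_succ_iff.1 hJ
  obtain ⟨a, b, hab, rfl⟩ := hℐ.exists_eq_Ico hpart hδ n I hI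
  obtain ⟨c, d, hac, -, hdb, rfl⟩ := (hpart a b hab).exists_eq_Ico J hJI
  exact ⟨_, hI, hJI, Ico_subset_Ico hac hdb⟩

theorem existsUnique_mem (hℐ : IsIntervalTree δ part ℐ) (hpart : SplitsIco part) (hδ : 0 < δ)
    {α : Ordinal.{u}} (hα : α < δ) : ∀ n, ∃! I, I ∈ ℐ n ∧ α ∈ I
  | 0 => ⟨Iio δ, ⟨hℐ.zero ▸ rfl, hα⟩, fun I hI => by simpa [hℐ.zero] using hI.1⟩
  | n + 1 => by
    obtain ⟨I, ⟨hI, hαI⟩, hIuniq⟩ := hℐ.existsUnique_mem hpart hδ hα n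
    obtain ⟨a, b, hab, rfl⟩ := hℐ.exists_eq_Ico hpart hδ n I hI
    obtain ⟨J, ⟨hJI, hαJ⟩, hJuniq⟩ := (hpart a b hab).existsUnique_mem α hαI
    refine ⟨J, ⟨hℐ.mem_succ_iff.2 ⟨_, hI, hJI⟩, hαJ⟩, fun J' ⟨hJ', hαJ'⟩ => ?_⟩
    obtain ⟨I', hI', hJ'I', hJ'sub⟩ := hℐ.exists_parent hpart hδ hJ'
    obtain rfl := hIuniq I' ⟨hI', hJ'sub hαJ'⟩
    exact hJuniq J' ⟨hJ'I', hαJ'⟩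

theorem subset_of_mem (hℐ : IsIntervalTree δ part ℐ) (hpart : SplitsIco part) (hδ : 0 < δ)
    {α : Ordinal.{u}} (hα : α < δ) {n : ℕ} {I J : Set Ordinal.{u}} (hI : I ∈ ℐ n)
    (hJ : J ∈ ℐ (n + 1)) (hαI : α ∈ I) (hαJ : α ∈ J) : J ⊆ I := by
  obtain ⟨I', hI', -, hJI'⟩ := hℐ.exists_parent hpart hδ hJ
  rwa [(hℐ.existsUnique_mem hpart hδ hα n).unique ⟨hI, hαI⟩ ⟨hI', hJI' hαJ⟩]

theorem exists_sInf_eq (hℐ : IsIntervalTree δ part ℐ) (hpart : SplitsIco part)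
    {α a b : Ordinal.{u}} {n : ℕ} (hI : Ico a b ∈ ℐ n) (hα : α ∈ Ico a b) :
    ∃ m, ∃ I ∈ ℐ m, sInf I = α := by
  induction b using WellFoundedLT.induction generalizing a n with
  | ind b ih =>
    obtain ⟨c, d, hJ, hαJ, hcd⟩ :=
      (hpart a b (hα.1.trans_lt hα.2)).exists_left_eq_or_right_lt α hα
    have hJ' : Ico c d ∈ ℐ (n + 1) := hℐ.mem_succ_iff.2 ⟨_, hI, hJ⟩
    rcases hcd with rfl | hdb
    · exact ⟨n + 1, _, hJ', csInf_Ico hαJ.2⟩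
    · exact ih d hdb hJ' hαJ

end IsIntervalTree

theorem interval_tree_general (δ : Ordinal.{u})
    (ℐ : ℕ → Set (Set Ordinal.{u}))
    (part : Set Ordinal.{u} → Set (Set Ordinal.{u}))
    (h0 : ℐ 0 = {Set.Iio δ})
    (hstep : ∀ n, ℐ (n + 1) = ⋃ I ∈ ℐ n, part I)
    (hpart_single : ∀ b : Ordinal.{u}, part (Set.Ico b (b + 1)) = {Set.Ico b (b + 1)})
    (hpart_succ : ∀ a b : Ordinal.{u}, a < b →
      part (Set.Ico a (b + 1)) = {Set.Ico a b, Set.Ico b (b + 1)})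
    (hpart_limit : ∀ a b : Ordinal.{u}, a < b → Order.IsSuccLimit b →
      ∃ e : Ordinal.{u} → Ordinal.{u},
        StrictMonoOn e (Set.Iio b.cof.ord) ∧ e 0 = a ∧
        (∀ ν < b.cof.ord, e ν ∈ Set.Ico a b) ∧
        (∀ ξ < b, ∃ ν < b.cof.ord, ξ ≤ e ν) ∧
        (∀ l < b.cof.ord, Order.IsSuccLimit l → e l = sSup (e '' Set.Iio l)) ∧
        part (Set.Ico a b) = {J | ∃ ν < b.cof.ord, J = Set.Ico (e ν) (e (ν + 1))}) :
    (∀ α < δ, ∀ n : ℕ, ∃! I : Set Ordinal.{u}, I ∈ ℐ n ∧ α ∈ I) ∧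
    (∀ α < δ, ∀ n : ℕ, ∀ I J : Set Ordinal.{u},
      I ∈ ℐ n → J ∈ ℐ (n + 1) → α ∈ I → α ∈ J → J ⊆ I) ∧
    (∀ α < δ, ∃ n : ℕ, ∃ I ∈ ℐ n, sInf I = α) := by
  obtain rfl | hδ := eq_zero_or_pos δ
  · simp
  have hℐ : IsIntervalTree δ part ℐ := ⟨h0, hstep⟩
  have hpart : SplitsIco part := splitsIco_of_cases hpart_single hpart_succ hpart_limit
  have hroot : Ico 0 δ ∈ ℐ 0 := hℐ.zero_eq_Ico ▸ mem_singleton _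
  exact ⟨fun α hα => hℐ.existsUnique_mem hpart hδ hα,
    fun α hα _ _ _ => hℐ.subset_of_mem hpart hδ hα,
    fun α hα => hℐ.exists_sInf_eq hpart hroot ⟨zero_le, hα⟩⟩

/-- The tree of intervals `𝓘_n` obtained by iteratively partitioning `[0, δ)`:
each `α < δ` lies in a unique interval of each level, levels are nested, and
every `α < δ` is eventually the minimum of its interval. -/
theorem interval_tree (δ : Ordinal.{u}) (hδ : 0 < δ)
    (ℐ : ℕ → Set (Set Ordinal.{u}))
    (part : Set Ordinal.{u} → Set (Set Ordinal.{u}))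
    (h0 : ℐ 0 = {Set.Iio δ})
    (hstep : ∀ n, ℐ (n + 1) = ⋃ I ∈ ℐ n, part I)
    (hpart_single : ∀ b : Ordinal.{u}, part (Set.Ico b (b + 1)) = {Set.Ico b (b + 1)})
    (hpart_succ : ∀ a b : Ordinal.{u}, a < b →
      part (Set.Ico a (b + 1)) = {Set.Ico a b, Set.Ico b (b + 1)})
    (hpart_limit : ∀ a b : Ordinal.{u}, a < b → Order.IsSuccLimit b →
      ∃ e : Ordinal.{u} → Ordinal.{u},
        StrictMonoOn e (Set.Iio b.cof.ord) ∧ e 0 = a ∧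
        (∀ ν < b.cof.ord, e ν ∈ Set.Ico a b) ∧
        (∀ ξ < b, ∃ ν < b.cof.ord, ξ ≤ e ν) ∧
        (∀ l < b.cof.ord, Order.IsSuccLimit l → e l = sSup (e '' Set.Iio l)) ∧
        part (Set.Ico a b) = {J | ∃ ν < b.cof.ord, J = Set.Ico (e ν) (e (ν + 1))}) :
    (∀ α < δ, ∀ n : ℕ, ∃! I : Set Ordinal.{u}, I ∈ ℐ n ∧ α ∈ I) ∧
    (∀ α < δ, ∀ n : ℕ, ∀ I J : Set Ordinal.{u},
      I ∈ ℐ n → J ∈ ℐ (n + 1) → α ∈ I → α ∈ J → J ⊆ I) ∧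
    (∀ α < δ, ∃ n : ℕ, ∃ I ∈ ℐ n, sInf I = α) :=
  interval_tree_general δ ℐ part h0 hstep hpart_single hpart_succ hpart_limit
end
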